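/- Decomposition of directional derivatives: Let F:ℝᵈ→ℝ be given by F(x) = Σᵢ₌₁ⁿ fᵢ(x) where each fᵢ is a sum of (a) smooth terms in the coordinates indexed by a set E_X, and (b) terms of the form 2·cⱼ·‖x_{Aⱼ}‖ with cⱼ ≥ 0 where Aⱼ ∩ E_X = ∅ (x_{Aⱼ} the restriction to coordinates in Aⱼ). Then for any direction p, the one-sided directional derivative at a point x₀ supported on E_X satisfies F'(x₀; p) = F'(x₀; p_X) + F'(x₀; p_⊥), where p_X is the restriction of p to coordinates in E_X (extended by zero) and p_⊥ = p − p_X. -/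

import Mathlib

/-!
At `x₀` every norm term vanishes, since `x₀` is zero off `EX` and each `Aⱼ` is disjoint from `EX`.
Hence along any ray from `x₀` the norm part equals `α · N(p)`, where `N` is the sum of the norm
terms, so its one-sided directional derivative is `N(p) = N(p_X) + N(p_⊥)`: indeed `N(p_X) = 0`
and `N(p_⊥) = N(p)`. The smooth part `G` is differentiable, so its directional derivative
`G'(x₀) p` is linear in `p`, and `G'(x₀) p_⊥ = 0` because `G` is constant along `p_⊥`.
-/

open Filter Topology

noncomputable section

section GroupNormSum

variable {ι κ : Type*} [Fintype ι] (c : ι → ℝ) (A : ι → Finset κ)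

def groupNormSum (x : κ → ℝ) : ℝ :=
  ∑ j, 2 * c j * √(∑ e ∈ A j, x e ^ 2)

variable {c A}

theorem groupNormSum_congr {x y : κ → ℝ} (h : ∀ j, ∀ e ∈ A j, x e = y e) :
    groupNormSum c A x = groupNormSum c A y := by
  unfold groupNormSum
  refine Finset.sum_congr rfl fun j _ => ?_
  rw [Finset.sum_congr rfl fun e he => by rw [h j e he]]

theorem groupNormSum_smul_of_nonneg {t : ℝ} (ht : 0 ≤ t) (x : κ → ℝ) :
    groupNormSum c A (t • x) = t * groupNormSum c A x := by
  unfold groupNormSum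
  rw [Finset.mul_sum]
  refine Finset.sum_congr rfl fun j _ => ?_
  have hsq : ∑ e ∈ A j, (t • x) e ^ 2 = t ^ 2 * ∑ e ∈ A j, x e ^ 2 := by
    rw [Finset.mul_sum]
    exact Finset.sum_congr rfl fun e _ => by rw [Pi.smul_apply, smul_eq_mul, mul_pow]
  rw [hsq, Real.sqrt_mul (sq_nonneg t), Real.sqrt_sq ht]
  ring

theorem groupNormSum_eq_zero {x : κ → ℝ} (hx : ∀ j, ∀ e ∈ A j, x e = 0) :
    groupNormSum c A x = 0 := by
  calc groupNormSum c A x = groupNormSum c A ((0 : ℝ) • x) :=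
        groupNormSum_congr fun j e he => by simp [hx j e he]
    _ = 0 := by rw [groupNormSum_smul_of_nonneg le_rfl, zero_mul]

theorem groupNormSum_add_smul_of_nonneg {x : κ → ℝ} (hx : ∀ j, ∀ e ∈ A j, x e = 0)
    {t : ℝ} (ht : 0 ≤ t) (v : κ → ℝ) :
    groupNormSum c A (x + t • v) = t * groupNormSum c A v := by
  rw [← groupNormSum_smul_of_nonneg ht]
  exact groupNormSum_congr fun j e he => by simp [hx j e he]

theorem tendsto_slope_groupNormSum {x : κ → ℝ} (hx : ∀ j, ∀ e ∈ A j, x e = 0) (v : κ → ℝ) :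
    Tendsto (fun t => (groupNormSum c A (x + t • v) - groupNormSum c A x) / t) (𝓝[>] 0)
      (𝓝 (groupNormSum c A v)) := by
  refine tendsto_const_nhds.congr' ?_
  filter_upwards [self_mem_nhdsWithin] with t (ht : 0 < t)
  rw [groupNormSum_add_smul_of_nonneg hx ht.le, groupNormSum_eq_zero hx, sub_zero,
    mul_div_cancel_left₀ _ ht.ne']

end GroupNormSum

theorem fderiv_apply_eq_zero_of_forall_add_smul_eq {𝕜 E F : Type*} [NontriviallyNormedField 𝕜]
    [NormedAddCommGroup E] [NormedSpace 𝕜 E] [NormedAddCommGroup F] [NormedSpace 𝕜 F]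
    {G : E → F} {x v : E} (hG : DifferentiableAt 𝕜 G x) (h : ∀ t : 𝕜, G (x + t • v) = G x) :
    fderiv 𝕜 G x v = 0 := by
  have hconst : HasLineDerivAt 𝕜 G 0 x v := by
    unfold HasLineDerivAt
    rw [funext h]
    exact hasDerivAt_const _ _
  exact (hG.hasFDerivAt.hasLineDerivAt v).unique hconst

theorem tendsto_slope_add_groupNormSum {ι κ : Type*} [Fintype ι] [Fintype κ] {c : ι → ℝ}
    {A : ι → Finset κ} {G : (κ → ℝ) → ℝ} {x : κ → ℝ} (hG : DifferentiableAt ℝ G x)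
    (hx : ∀ j, ∀ e ∈ A j, x e = 0) (v : κ → ℝ) :
    Tendsto (fun t => (G (x + t • v) + groupNormSum c A (x + t • v)
        - (G x + groupNormSum c A x)) / t) (𝓝[>] 0)
      (𝓝 (fderiv ℝ G x v + groupNormSum c A v)) := by
  have hGslope := (hG.hasFDerivAt.hasLineDerivAt v).tendsto_slope_zero_right
  refine (hGslope.add (tendsto_slope_groupNormSum hx v)).congr fun t => ?_
  simp only [smul_eq_mul]
  ring

end

theorem directional_derivative_decomposition_general
    (d m : ℕ) (EX : Finset (Fin d))
    (c : Fin m → ℝ)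
    (A : Fin m → Finset (Fin d)) (hA : ∀ j, Disjoint (A j) EX)
    (G : (Fin d → ℝ) → ℝ)
    (hGdep : ∀ x y : Fin d → ℝ, (∀ e ∈ EX, x e = y e) → G x = G y)
    (x₀ : Fin d → ℝ) (hx₀supp : ∀ e, e ∉ EX → x₀ e = 0)
    (hGdiff : DifferentiableAt ℝ G x₀)
    (F : (Fin d → ℝ) → ℝ)
    (hF : ∀ x, F x = G x + ∑ j, 2 * c j * Real.sqrt (∑ e ∈ A j, x e ^ 2))
    (p : Fin d → ℝ) :
    ∃ L L₁ L₂ : ℝ,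
      Tendsto (fun α : ℝ => (F (x₀ + α • p) - F x₀) / α)
        (nhdsWithin 0 (Set.Ioi 0)) (nhds L) ∧
      Tendsto (fun α : ℝ =>
          (F (x₀ + α • (fun e => if e ∈ EX then p e else 0)) - F x₀) / α)
        (nhdsWithin 0 (Set.Ioi 0)) (nhds L₁) ∧
      Tendsto (fun α : ℝ =>
          (F (x₀ + α • (fun e => if e ∈ EX then 0 else p e)) - F x₀) / α)
        (nhdsWithin 0 (Set.Ioi 0)) (nhds L₂) ∧
      L = L₁ + L₂ := by
  set pX : Fin d → ℝ := fun e => if e ∈ EX then p e else 0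
  set pP : Fin d → ℝ := fun e => if e ∈ EX then 0 else p e
  obtain rfl : F = fun x => G x + groupNormSum c A x := funext hF
  have hAX : ∀ j, ∀ e ∈ A j, e ∉ EX := fun j _ he => Finset.disjoint_left.mp (hA j) he
  have hx₀A : ∀ j, ∀ e ∈ A j, x₀ e = 0 := fun j e he => hx₀supp e (hAX j e he)
  have hslope := tendsto_slope_add_groupNormSum (c := c) hGdiff hx₀A
  refine ⟨_, _, _, hslope p, hslope pX, hslope pP, ?_⟩
  have hGp : fderiv ℝ G x₀ p = fderiv ℝ G x₀ pX + fderiv ℝ G x₀ pP := by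
    rw [← map_add]
    congr 1
    ext e
    by_cases he : e ∈ EX <;> simp [pX, pP, he]
  have hGpP : fderiv ℝ G x₀ pP = 0 :=
    fderiv_apply_eq_zero_of_forall_add_smul_eq hGdiff fun t =>
      hGdep _ _ fun e he => by simp [pP, he]
  have hNpX : groupNormSum c A pX = 0 :=
    groupNormSum_eq_zero fun j e he => by simp [pX, hAX j e he]
  have hNpP : groupNormSum c A pP = groupNormSum c A p :=
    groupNormSum_congr fun j e he => by simp [pP, hAX j e he]
  rw [hGp, hGpP, hNpX, hNpP]
  ring

/-- Decomposition of directional derivatives: for a function that is a sum of a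
smooth part depending only on the coordinates in `EX` and norm terms
`2·cⱼ·‖x_{Aⱼ}‖` with `Aⱼ ∩ EX = ∅`, at a point `x₀` supported (with positive
entries) on `EX`, the one-sided directional derivative in direction `p` exists
and splits as the sum of the directional derivatives along the component of `p`
in the coordinates `EX` and the component perpendicular to them. -/
theorem directional_derivative_decomposition
    (d m : ℕ) (EX : Finset (Fin d))
    (c : Fin m → ℝ) (hc : ∀ j, 0 ≤ c j)
    (A : Fin m → Finset (Fin d)) (hA : ∀ j, Disjoint (A j) EX)
    (G : (Fin d → ℝ) → ℝ)
    (hGdep : ∀ x y : Fin d → ℝ, (∀ e ∈ EX, x e = y e) → G x = G y)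
    (x₀ : Fin d → ℝ) (hx₀supp : ∀ e, e ∉ EX → x₀ e = 0)
    (hx₀pos : ∀ e ∈ EX, 0 < x₀ e)
    (hGdiff : DifferentiableAt ℝ G x₀)
    (F : (Fin d → ℝ) → ℝ)
    (hF : ∀ x, F x = G x + ∑ j, 2 * c j * Real.sqrt (∑ e ∈ A j, x e ^ 2))
    (p : Fin d → ℝ) :
    ∃ L L₁ L₂ : ℝ,
      Tendsto (fun α : ℝ => (F (x₀ + α • p) - F x₀) / α)
        (nhdsWithin 0 (Set.Ioi 0)) (nhds L) ∧
      Tendsto (fun α : ℝ =>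
          (F (x₀ + α • (fun e => if e ∈ EX then p e else 0)) - F x₀) / α)
        (nhdsWithin 0 (Set.Ioi 0)) (nhds L₁) ∧
      Tendsto (fun α : ℝ =>
          (F (x₀ + α • (fun e => if e ∈ EX then 0 else p e)) - F x₀) / α)
        (nhdsWithin 0 (Set.Ioi 0)) (nhds L₂) ∧
      L = L₁ + L₂ :=
  directional_derivative_decomposition_general d m EX c A hA G hGdep x₀ hx₀supp hGdiff F hF p
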